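/- Let G ≤ Aut(X_k^*) be a self-similar group. Suppose some g ∈ G satisfies: (1) σ_g is nontrivial of order n > 1; (2) there exists i ∈ X_k with σ_g(i) = i and g|_i = g; (3) there exists j ∈ X_k such that g^n|_j = g^m for some integer m with 0 < |m| < n. Then G is not contracting. -/

import Mathlib

/-!
Common framework: automorphisms of the rooted tree `X_k^*`, root permutations,
sections, self-similar and contracting groups, Hanoi automorphisms and Hanoi
groups, following Makisumi–Stadnyk–Steinhurst, "Modified Hanoi Towers Groups
and Limit Spaces".

A word `x_n … x_1` over the alphabet `X_k = Fin k` is encoded as the list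
`[x_n, …, x_1]`, whose head `x_n` is the first letter, i.e. the letter that a
tree automorphism reads (and permutes) first.
-/

namespace Hanoi

/-- Words over the alphabet `X_k = Fin k`. -/
abbrev Word (k : ℕ) := List (Fin k)

/-- `e` is an automorphism of the rooted tree `X_k^*`: it fixes the root
(the empty word), preserves word length (levels) and preserves the tree
structure (words sharing an initial segment of length `n` are sent to words
sharing an initial segment of length `n`). -/
def IsTreeAut {k : ℕ} (e : Equiv.Perm (Word k)) : Prop :=
  (∀ w : Word k, (e w).length = w.length) ∧
    ∀ (w v : Word k) (n : ℕ), w.take n = v.take n → (e w).take n = (e v).take n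

open Classical in
/-- The root permutation `σ_e` of a tree automorphism `e` (its action on
one-letter words). -/
noncomputable def rootPerm {k : ℕ} (e : Equiv.Perm (Word k)) : Equiv.Perm (Fin k) :=
  if h : Function.Bijective (fun x : Fin k => ((e [x]).head?.getD x)) then
    Equiv.ofBijective _ h
  else 1

open Classical in
/-- The section `e|_x` of `e` at a letter `x`: the unique automorphism with
`e (x :: w) = σ_e x :: (e|_x) w` for all words `w`. -/
noncomputable def sec {k : ℕ} (e : Equiv.Perm (Word k)) (x : Fin k) : Equiv.Perm (Word k) :=
  if h : Function.Bijective (fun w : Word k => (e (x :: w)).tail) then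
    Equiv.ofBijective _ h
  else 1

/-- The section `e|_v` of `e` at a word `v = x_n … x_1`, defined by
`e|_v = (e|_{x_n})|_{x_{n-1} … x_1}`. -/
noncomputable def secW {k : ℕ} (e : Equiv.Perm (Word k)) : Word k → Equiv.Perm (Word k)
  | [] => e
  | x :: v => secW (sec e x) v

/-- A subgroup of the permutations of `X_k^*` is self-similar if it consists of
tree automorphisms and is closed under taking sections. -/
def IsSelfSimilar {k : ℕ} (G : Subgroup (Equiv.Perm (Word k))) : Prop :=
  (∀ g ∈ G, IsTreeAut g) ∧ ∀ g ∈ G, ∀ x : Fin k, sec g x ∈ G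

/-- A self-similar group `G` is contracting if there is a finite subset `N ⊆ G`
such that for every `g ∈ G` all sections of `g` at words of length at least
some `m` lie in `N`. -/
def IsContracting {k : ℕ} (G : Subgroup (Equiv.Perm (Word k))) : Prop :=
  ∃ N : Set (Equiv.Perm (Word k)), N.Finite ∧ N ⊆ (G : Set (Equiv.Perm (Word k))) ∧
    ∀ g ∈ G, ∃ m : ℕ, ∀ v : Word k, m ≤ v.length → secW g v ∈ N

/-- `N` is the nucleus of `G`: a smallest finite subset of `G` catching all
deep enough sections of every element of `G`. -/
def IsNucleus {k : ℕ} (G : Subgroup (Equiv.Perm (Word k)))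
    (N : Set (Equiv.Perm (Word k))) : Prop :=
  (N.Finite ∧ N ⊆ (G : Set (Equiv.Perm (Word k))) ∧
    ∀ g ∈ G, ∃ m : ℕ, ∀ v : Word k, m ≤ v.length → secW g v ∈ N) ∧
  ∀ N' : Set (Equiv.Perm (Word k)), N'.Finite → N' ⊆ (G : Set (Equiv.Perm (Word k))) →
    (∀ g ∈ G, ∃ m : ℕ, ∀ v : Word k, m ≤ v.length → secW g v ∈ N') → N ⊆ N'

/-- `a` is a Hanoi automorphism with set of inactive pegs `Q`: the section at
each active peg (element of the complement of `Q`) is trivial, the section at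
each inactive peg is `a` itself, and the root permutation fixes each inactive
peg. -/
def IsHanoiWith {k : ℕ} (a : Equiv.Perm (Word k)) (Q : Set (Fin k)) : Prop :=
  IsTreeAut a ∧ (∀ i ∉ Q, sec a i = 1) ∧ (∀ j ∈ Q, sec a j = a) ∧
    ∀ j ∈ Q, rootPerm a j = j

/-- `a` is a `k`-peg Hanoi automorphism. -/
def IsHanoiAut {k : ℕ} (a : Equiv.Perm (Word k)) : Prop := ∃ Q, IsHanoiWith a Q

open Classical in
/-- The set `Q_a` of inactive pegs of a Hanoi automorphism `a`; by convention
`Q_1 = X_k` (for `a ≠ 1` the set of inactive pegs is uniquely determined). -/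
noncomputable def inactivePegs {k : ℕ} (a : Equiv.Perm (Word k)) : Set (Fin k) :=
  if a = 1 then Set.univ
  else if h : ∃ Q, IsHanoiWith a Q then h.choose else ∅

/-- `S_{k,q}`: the set of Hanoi automorphisms over `X_k` with exactly `q`
inactive pegs. -/
noncomputable def hanoiSet (k q : ℕ) : Set (Equiv.Perm (Word k)) :=
  {a | IsHanoiAut a ∧ (inactivePegs a).ncard = q}

/-- `L = [s_n, …, s_1]` is a representation of `g` over the generating set `S`:
each `s_i ∈ S ∪ S⁻¹` and `g = s_n ⋯ s_2 s_1`. -/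
def IsRepOf {k : ℕ} (S : Set (Equiv.Perm (Word k))) (L : List (Equiv.Perm (Word k)))
    (g : Equiv.Perm (Word k)) : Prop :=
  (∀ s ∈ L, s ∈ S ∨ s⁻¹ ∈ S) ∧ L.prod = g

/-- The length `l(g)` of `g` with respect to `S`: the length of a minimal
representation (`0` for the identity). -/
noncomputable def repLength {k : ℕ} (S : Set (Equiv.Perm (Word k)))
    (g : Equiv.Perm (Word k)) : ℕ :=
  sInf {n | ∃ L, IsRepOf S L g ∧ L.length = n}

/-- The essential set of a representation: the intersection of the sets of
inactive pegs of its letters. -/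
noncomputable def essSet {k : ℕ} (L : List (Equiv.Perm (Word k))) : Set (Fin k) :=
  ⋂ s ∈ L, inactivePegs s

/-- The prenucleus of `G`: the set of elements `g ∈ G` with `g|_j = g` for some
letter `j`. -/
noncomputable def preNucleus {k : ℕ} (G : Subgroup (Equiv.Perm (Word k))) :
    Set (Equiv.Perm (Word k)) :=
  {g | g ∈ G ∧ ∃ j : Fin k, sec g j = g}

/-- The underlying function of the Hanoi Towers move `a_{ij}`: it changes the
first occurrence of `i` or `j` in a word by means of the transposition `(i j)`
and leaves the rest of the word unchanged. -/
def hanoiMoveFun {k : ℕ} (i j : Fin k) : Word k → Word k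
  | [] => []
  | x :: w => if x = i ∨ x = j then Equiv.swap i j x :: w else x :: hanoiMoveFun i j w

theorem hanoiMoveFun_involutive {k : ℕ} (i j : Fin k) :
    Function.Involutive (hanoiMoveFun i j) := by
  intro w
  induction w with
  | nil => rfl
  | cons x t ih =>
    by_cases h : x = i ∨ x = j
    · have h2 : Equiv.swap i j x = i ∨ Equiv.swap i j x = j := by
        rcases h with h | h <;> subst h <;> simp
      simp only [hanoiMoveFun, if_pos h, if_pos h2, Equiv.swap_apply_self]
    · simp only [hanoiMoveFun, if_neg h, ih]

/-- The Hanoi Towers move `a_{ij}`, as a permutation of `X_k^*`: its root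
permutation is the transposition `(i j)`, its sections at `i` and `j` are
trivial and all its other sections equal `a_{ij}` itself. -/
def hanoiMove {k : ℕ} (i j : Fin k) : Equiv.Perm (Word k) :=
  (hanoiMoveFun_involutive i j).toPerm

/-- The orbit of the letter `j` under the subgroup of `Sym(X_k)` generated by
the root permutations of the elements of `T`. -/
noncomputable def orbT {k : ℕ} (T : Finset (Equiv.Perm (Word k))) (j : Fin k) : Set (Fin k) :=
  MulAction.orbit (Subgroup.closure ((fun a => rootPerm a) '' (T : Set (Equiv.Perm (Word k))))) j

/-- The set `Fix(T)` of letters fixed by the root permutation of every element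
of `T`. -/
noncomputable def fixT {k : ℕ} (T : Finset (Equiv.Perm (Word k))) : Set (Fin k) :=
  {x | ∀ s ∈ T, rootPerm s x = x}

/-- Condition (*) on a generating set `S` of Hanoi automorphisms: for every
finite `T ⊆ S` with nonempty essential set and every letter `j ∉ Fix(T)`,
the orbit of `j` misses the inactive pegs of some element of `T`. -/
noncomputable def CondStar {k : ℕ} (S : Set (Equiv.Perm (Word k))) : Prop :=
  ∀ T : Finset (Equiv.Perm (Word k)), (T : Set (Equiv.Perm (Word k))) ⊆ S →
    (⋂ s ∈ T, inactivePegs s).Nonempty →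
    ∀ j : Fin k, j ∉ fixT T →
      ∃ s ∈ T, orbT T j ∩ inactivePegs s = ∅

open Classical in
/-- `d(g)`: the least number of distinct generators occurring among all
representations of `g` having nonempty essential set. -/
noncomputable def dCount {k : ℕ} (S : Set (Equiv.Perm (Word k)))
    (g : Equiv.Perm (Word k)) : ℕ :=
  sInf {M | ∃ L, IsRepOf S L g ∧ (essSet L).Nonempty ∧ L.toFinset.card = M}

/-- `S` is fully symmetric: for every non-identity `a ∈ S` and every
`φ ∈ Sym(X_k)`, the Hanoi automorphism `φ·a` with inactive pegs `φ(Q_a)` and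
root permutation `φ ∘ σ_a ∘ φ⁻¹` again lies in `S`. -/
noncomputable def FullySymmetric {k : ℕ} (S : Set (Equiv.Perm (Word k))) : Prop :=
  ∀ a ∈ S, a ≠ 1 → ∀ φ : Equiv.Perm (Fin k), ∀ b : Equiv.Perm (Word k),
    IsHanoiWith b (φ '' inactivePegs a) →
    rootPerm b = φ * rootPerm a * φ⁻¹ → b ∈ S

/-- The family `R̲_{k,n}`: the identity together with all Hanoi automorphisms
`a` such that (1) `Q_a ⊆ {m+1, …, m+n}` for some `m`, and (2) whenever
`i ∈ Q_a` the root permutation of `a` fixes `i-1, …, i-(n-1)`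
(all peg labels mod `k`). -/
noncomputable def Runder (k n : ℕ) : Set (Equiv.Perm (Word k)) :=
  {a | a = 1 ∨ (IsHanoiAut a ∧
    (∃ m : Fin k, ∀ q ∈ inactivePegs a, ∃ t : ℕ, 1 ≤ t ∧ t ≤ n ∧
      (q : ℕ) = ((m : ℕ) + t) % k) ∧
    ∀ i ∈ inactivePegs a, ∀ x : Fin k, ∀ t : ℕ, 1 ≤ t → t ≤ n - 1 →
      ((x : ℕ) + t) % k = (i : ℕ) → rootPerm a x = x)}

/-- The family `R̄_{k,n}`: the identity together with all Hanoi automorphisms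
`a` such that (1) `Q_a ⊆ {m+1, …, m+n}` for some `m`, and (2) whenever
`i ∈ Q_a` the root permutation of `a` fixes `i+1, …, i+(n-1)`
(all peg labels mod `k`). -/
noncomputable def Rover (k n : ℕ) : Set (Equiv.Perm (Word k)) :=
  {a | a = 1 ∨ (IsHanoiAut a ∧
    (∃ m : Fin k, ∀ q ∈ inactivePegs a, ∃ t : ℕ, 1 ≤ t ∧ t ≤ n ∧
      (q : ℕ) = ((m : ℕ) + t) % k) ∧
    ∀ i ∈ inactivePegs a, ∀ x : Fin k, ∀ t : ℕ, 1 ≤ t → t ≤ n - 1 →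
      (x : ℕ) = ((i : ℕ) + t) % k → rootPerm a x = x)}

/-- The finite word `x_m … x_1` (first letter `x_m`) read off from a
left-infinite sequence `… x_2 x_1`, encoded as `x : ℕ → Fin k` with
`x s = x_{s+1}`. -/
def wordOf {k : ℕ} (x : ℕ → Fin k) (m : ℕ) : Word k := (List.range m).reverse.map x

/-!
Since `σ_g` fixes `i` and `g|_i = g`, every power of `g` is its own section at `i`, hence at
every word `i⋯i`; so in a contracting group all powers of `g` lie in the finite set catching deep
sections, and `g` has finite order `d`, a multiple of `n = ord σ_g`. As `σ_{g^n} = 1`, the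
section at `j` is multiplicative on powers of `g^n`, whence `1 = (g^n)^{d/n}|_j = (g^m)^{d/n}`.
Thus `d ∣ m d / n`, i.e. `n ∣ m`, which is impossible for `0 < |m| < n`.
-/

namespace IsTreeAut

variable {k : ℕ} {e a b : Equiv.Perm (Word k)}

theorem apply_singleton (he : IsTreeAut e) (x : Fin k) :
    e [x] = [(e [x]).head?.getD x] := by
  obtain ⟨y, hy⟩ := List.length_eq_one_iff.mp (he.1 [x])
  simp [hy]

theorem apply_singleton_eq_rootPerm (he : IsTreeAut e) (x : Fin k) :
    e [x] = [rootPerm e x] := by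
  have hinj : Function.Injective (fun x : Fin k => (e [x]).head?.getD x) := by
    intro x y hxy
    have h := he.apply_singleton x
    rw [show (e [x]).head?.getD x = (e [y]).head?.getD y from hxy, ← he.apply_singleton y] at h
    simpa using e.injective h
  rw [rootPerm, dif_pos (Finite.injective_iff_bijective.mp hinj)]
  exact he.apply_singleton x

theorem apply_cons_eq_rootPerm_cons_tail (he : IsTreeAut e) (x : Fin k) (w : Word k) :
    e (x :: w) = rootPerm e x :: (e (x :: w)).tail := by
  have hhead : (e (x :: w)).take 1 = [rootPerm e x] := by
    rw [he.2 (x :: w) [x] 1 rfl, he.apply_singleton_eq_rootPerm]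
    rfl
  conv_lhs => rw [← List.take_append_drop 1 (e (x :: w)), hhead, List.drop_one]
  rfl

theorem bijective_tail_apply_cons (he : IsTreeAut e) (x : Fin k) :
    Function.Bijective (fun w : Word k => (e (x :: w)).tail) := by
  refine ⟨fun w w' h => ?_, fun u => ?_⟩
  · have : e (x :: w) = e (x :: w') := by
      rw [he.apply_cons_eq_rootPerm_cons_tail, he.apply_cons_eq_rootPerm_cons_tail x w']
      exact congrArg _ h
    simpa using e.injective this
  · obtain ⟨z, v, hv⟩ : ∃ z v, e.symm (rootPerm e x :: u) = z :: v := by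
      cases h : e.symm (rootPerm e x :: u) with
      | nil =>
        have hlen := he.1 (e.symm (rootPerm e x :: u))
        rw [Equiv.apply_symm_apply, h] at hlen
        simp at hlen
      | cons z v => exact ⟨z, v, rfl⟩
    have hzv : e (z :: v) = rootPerm e x :: u := by rw [← hv, Equiv.apply_symm_apply]
    rw [he.apply_cons_eq_rootPerm_cons_tail] at hzv
    obtain ⟨hz, hu⟩ := List.cons.inj hzv
    exact ⟨v, (rootPerm e).injective hz ▸ hu⟩

theorem apply_cons (he : IsTreeAut e) (x : Fin k) (w : Word k) :
    e (x :: w) = rootPerm e x :: sec e x w := by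
  rw [sec, dif_pos (he.bijective_tail_apply_cons x)]
  exact he.apply_cons_eq_rootPerm_cons_tail x w

theorem mul (ha : IsTreeAut a) (hb : IsTreeAut b) : IsTreeAut (a * b) :=
  ⟨fun w => by rw [Equiv.Perm.mul_apply, ha.1, hb.1], fun w v n h => ha.2 _ _ n (hb.2 w v n h)⟩

end IsTreeAut

section Sections

variable {k : ℕ} {a b : Equiv.Perm (Word k)}

theorem isTreeAut_one : IsTreeAut (1 : Equiv.Perm (Word k)) :=
  ⟨fun _ => rfl, fun _ _ _ h => h⟩

theorem IsTreeAut.pow (ha : IsTreeAut a) (t : ℕ) : IsTreeAut (a ^ t) := by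
  induction t with
  | zero => exact isTreeAut_one
  | succ t ih => rw [pow_succ]; exact ih.mul ha

theorem rootPerm_one : rootPerm (1 : Equiv.Perm (Word k)) = 1 := by
  ext x
  exact congrArg Fin.val (List.singleton_inj.mp (isTreeAut_one.apply_singleton_eq_rootPerm x)).symm

theorem sec_one (x : Fin k) : sec (1 : Equiv.Perm (Word k)) x = 1 := by
  ext w : 1
  exact (List.cons.inj (isTreeAut_one.apply_cons x w)).2.symm

theorem rootPerm_mul (ha : IsTreeAut a) (hb : IsTreeAut b) :
    rootPerm (a * b) = rootPerm a * rootPerm b := by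
  ext x
  have h := (ha.mul hb).apply_singleton_eq_rootPerm x
  rw [Equiv.Perm.mul_apply, hb.apply_singleton_eq_rootPerm, ha.apply_singleton_eq_rootPerm] at h
  exact congrArg Fin.val (List.singleton_inj.mp h).symm

theorem sec_mul (ha : IsTreeAut a) (hb : IsTreeAut b) (x : Fin k) :
    sec (a * b) x = sec a (rootPerm b x) * sec b x := by
  ext w : 1
  have h := (ha.mul hb).apply_cons x w
  rw [Equiv.Perm.mul_apply, hb.apply_cons, ha.apply_cons] at h
  exact (List.cons.inj h).2.symm

theorem rootPerm_pow (ha : IsTreeAut a) (t : ℕ) : rootPerm (a ^ t) = rootPerm a ^ t := by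
  induction t with
  | zero => exact rootPerm_one
  | succ t ih => rw [pow_succ, rootPerm_mul (ha.pow t) ha, ih, pow_succ]

theorem sec_pow_of_rootPerm_apply_eq (ha : IsTreeAut a) {x : Fin k} (hx : rootPerm a x = x)
    (t : ℕ) : sec (a ^ t) x = sec a x ^ t := by
  induction t with
  | zero => exact sec_one x
  | succ t ih => rw [pow_succ, sec_mul (ha.pow t) ha, hx, ih, pow_succ]

theorem secW_replicate_of_sec_eq_self {x : Fin k} (h : sec a x = a) (s : ℕ) :
    secW a (List.replicate s x) = a := by
  induction s with
  | zero => rfl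
  | succ s ih => rw [List.replicate_succ, secW, h, ih]

end Sections

theorem preNucleus_subset_of_forall_secW_mem {k : ℕ} {G : Subgroup (Equiv.Perm (Word k))}
    {N : Set (Equiv.Perm (Word k))}
    (hN : ∀ g ∈ G, ∃ m : ℕ, ∀ v : Word k, m ≤ v.length → secW g v ∈ N) :
    preNucleus G ⊆ N := by
  rintro g ⟨hg, x, hx⟩
  obtain ⟨m, hm⟩ := hN g hg
  simpa [secW_replicate_of_sec_eq_self hx] using hm (List.replicate m x) (by simp)

theorem IsContracting.isOfFinOrder_of_sec_eq_self {k : ℕ} {G : Subgroup (Equiv.Perm (Word k))}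
    (hG : IsContracting G) {g : Equiv.Perm (Word k)} (hg : g ∈ G) (hgT : IsTreeAut g)
    {x : Fin k} (hx : rootPerm g x = x) (hsec : sec g x = g) : IsOfFinOrder g := by
  obtain ⟨N, hNfin, -, hN⟩ := hG
  refine finite_powers.mp (hNfin.subset ?_)
  rintro _ ⟨t, rfl⟩
  refine preNucleus_subset_of_forall_secW_mem hN ⟨pow_mem hg t, x, ?_⟩
  rw [sec_pow_of_rootPerm_apply_eq hgT hx, hsec]

theorem natCast_dvd_of_zpow_pow_eq_one {M : Type*} [Group M] {g : M} {n t : ℕ} (ht : t ≠ 0)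
    (hd : orderOf g = n * t) {m : ℤ} (h : (g ^ m) ^ t = 1) : (n : ℤ) ∣ m := by
  rw [← zpow_natCast, ← zpow_mul, ← orderOf_dvd_iff_zpow_eq_one, hd, Nat.cast_mul] at h
  exact (mul_dvd_mul_iff_right (Int.natCast_ne_zero.mpr ht)).mp h

theorem noncontraction_condition_general {k : ℕ} (G : Subgroup (Equiv.Perm (Word k)))
    (hG : IsSelfSimilar G) (g : Equiv.Perm (Word k)) (hg : g ∈ G)
    (n : ℕ) (hord : orderOf (rootPerm g) = n)
    (i : Fin k) (hfix : rootPerm g i = i) (hsec : sec g i = g)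
    (j : Fin k) (m : ℤ) (hm0 : 0 < |m|) (hmn : |m| < (n : ℤ))
    (hj : sec (g ^ n) j = g ^ m) :
    ¬ IsContracting G := by
  intro hC
  have hgT : IsTreeAut g := hG.1 g hg
  have hfin : IsOfFinOrder g := hC.isOfFinOrder_of_sec_eq_self hg hgT hfix hsec
  obtain ⟨t, ht⟩ : n ∣ orderOf g :=
    hord ▸ orderOf_dvd_of_pow_eq_one (by rw [← rootPerm_pow hgT, pow_orderOf_eq_one, rootPerm_one])
  have ht0 : t ≠ 0 := by
    rintro rfl
    exact hfin.orderOf_pos.ne' ht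
  have hj_fix : rootPerm (g ^ n) j = j := by
    rw [rootPerm_pow hgT, ← hord, pow_orderOf_eq_one]
    rfl
  have hgmt : (g ^ m) ^ t = 1 := by
    rw [← hj, ← sec_pow_of_rootPerm_apply_eq (hgT.pow n) hj_fix, ← pow_mul, ← ht,
      pow_orderOf_eq_one, sec_one]
  have hnm : (n : ℤ) ∣ m := natCast_dvd_of_zpow_pow_eq_one ht0 ht hgmt
  have := Int.le_of_dvd hm0 ((dvd_abs _ _).mpr hnm)
  omega

/-- Lemma: a sufficient condition for non-contraction.
Let `G` be a self-similar group and suppose `g ∈ G` satisfies: (1) `σ_g` is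
nontrivial of order `n > 1`; (2) there is a letter `i` fixed by `σ_g` with
`g|_i = g`; (3) there is a letter `j` with `g^n|_j = g^m` for some integer `m`
with `0 < |m| < n`.  Then `G` is not contracting. -/
theorem noncontraction_condition {k : ℕ} (G : Subgroup (Equiv.Perm (Word k)))
    (hG : IsSelfSimilar G) (g : Equiv.Perm (Word k)) (hg : g ∈ G)
    (n : ℕ) (hn : 1 < n) (hσ : rootPerm g ≠ 1) (hord : orderOf (rootPerm g) = n)
    (i : Fin k) (hfix : rootPerm g i = i) (hsec : sec g i = g)
    (j : Fin k) (m : ℤ) (hm0 : 0 < |m|) (hmn : |m| < (n : ℤ))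
    (hj : sec (g ^ n) j = g ^ m) :
    ¬ IsContracting G :=
  noncontraction_condition_general G hG g hg n hord i hfix hsec j m hm0 hmn hj

end Hanoi
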